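/- arXiv:1612.03066 — 3 statements merged into one kernel-verified Lean document; each statement's English description precedes it below -/
import Mathlib

section
/- Let n ≥ 1 be an integer, σ > 0 and 0 < α < 1. Let Z and Z' be standard normal random variables and M and M' be chi-squared distributed with n degrees of freedom, with Z, Z', M, M' jointly independent. Set σ̂ := σ·√(M/n) and T' := √(n/M')·Z', and let F_{T'} denote the cumulative distribution function of T' and F_{T'}^{−1}(α) its α-quantile. Then P( σ·Z ≤ σ̂·F_{T'}^{−1}(α) ) = α; that is, the fiducial (inversion-method) solvency capital SCR(α) := σ̂·F_{T'}^{−1}(α), computed with the random estimate σ̂, attains probability of solvency exactly α. -/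
/-!
Since `σ > 0` and `M > 0` almost surely, the event `σ Z ≤ σ √(M/n) q` coincides almost surely
with `T ≤ q` for `T := √(n/M) Z`. As `(Z, M)` and `(Z', M')` are both independent pairs with the
same marginals, `T` has the law of `T'`, so `P(T ≤ q) = F_{T'}(q) = α`.
-/

open MeasureTheory ProbabilityTheory

/-- The chi-squared distribution with `n` degrees of freedom: the Gamma distribution
with shape `n/2` and rate `1/2`. -/
noncomputable def chiSquaredMeasure (n : ℕ) : Measure ℝ :=
  gammaMeasure ((n : ℝ) / 2) (1 / 2)

lemma gammaMeasure_Iic_zero (a r : ℝ) : gammaMeasure a r (Set.Iic 0) = 0 := by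
  rw [gammaMeasure, withDensity_apply _ measurableSet_Iic, ← setLIntegral_congr Iio_ae_eq_Iic]
  exact lintegral_gammaPDF_of_nonpos le_rfl

lemma ae_pos_gammaMeasure (a r : ℝ) : ∀ᵐ x ∂gammaMeasure a r, 0 < x := by
  simp_rw [ae_iff, not_lt]
  exact gammaMeasure_Iic_zero a r

lemma le_sqrt_mul_iff_sqrt_inv_mul_le {x z q : ℝ} (hx : 0 < x) :
    z ≤ √x * q ↔ √x⁻¹ * z ≤ q := by
  rw [Real.sqrt_inv, inv_mul_le_iff₀ (Real.sqrt_pos.2 hx)]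

theorem fiducial_scr_attains_alpha_general
    {Ω : Type*} [MeasurableSpace Ω] (P : Measure Ω) [IsProbabilityMeasure P]
    (n : ℕ) (hn : 1 ≤ n) (σ : ℝ) (hσ : 0 < σ) (α : ℝ)
    (Z Z' M M' : Ω → ℝ)
    (hZmeas : Measurable Z) (hZ'meas : Measurable Z')
    (hMmeas : Measurable M) (hM'meas : Measurable M')
    (hindep : iIndepFun ![Z, Z', M, M'] P)
    (hZ : P.map Z = gaussianReal 0 1) (hZ' : P.map Z' = gaussianReal 0 1)
    (hM : P.map M = chiSquaredMeasure n) (hM' : P.map M' = chiSquaredMeasure n)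
    -- `q = F_{T'}⁻¹(α)` is the `α`-quantile of `T' := √(n/M')·Z'`
    (q : ℝ)
    (hq : cdf (P.map (fun ω => Real.sqrt ((n : ℝ) / M' ω) * Z' ω)) q = α) :
    P {ω | σ * Z ω ≤ σ * Real.sqrt (M ω / (n : ℝ)) * q} = ENNReal.ofReal α := by
  have hZM : IndepFun Z M P := by
    simpa using hindep.indepFun (i := 0) (j := 2) (by decide)
  have hZ'M' : IndepFun Z' M' P := by
    simpa using hindep.indepFun (i := 1) (j := 3) (by decide)
  have hZZ' : IdentDistrib Z Z' P P :=
    ⟨hZmeas.aemeasurable, hZ'meas.aemeasurable, hZ.trans hZ'.symm⟩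
  have hMM' : IdentDistrib M M' P P :=
    ⟨hMmeas.aemeasurable, hM'meas.aemeasurable, hM.trans hM'.symm⟩
  have hT : IdentDistrib (fun ω => √((n : ℝ) / M ω) * Z ω) (fun ω => √((n : ℝ) / M' ω) * Z' ω)
      P P :=
    (hZZ'.prodMk hMM' hZM hZ'M').comp (u := fun p : ℝ × ℝ => √((n : ℝ) / p.2) * p.1)
      ((measurable_const.div measurable_snd).sqrt.mul measurable_fst)
  have hMpos : ∀ᵐ ω ∂P, 0 < M ω :=
    ae_of_ae_map hMmeas.aemeasurable (hM ▸ ae_pos_gammaMeasure _ _)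
  have hevent :
      {ω | σ * Z ω ≤ σ * √(M ω / n) * q} =ᵐ[P] {ω | √((n : ℝ) / M ω) * Z ω ≤ q} := by
    rw [Filter.eventuallyEq_set]
    filter_upwards [hMpos] with ω hω
    have hMn : 0 < M ω / n := div_pos hω (by exact_mod_cast hn)
    rw [mul_assoc, mul_le_mul_iff_right₀ hσ,
      le_sqrt_mul_iff_sqrt_inv_mul_le hMn, inv_div]
  have : IsProbabilityMeasure (P.map fun ω => √((n : ℝ) / M' ω) * Z' ω) :=
    Measure.isProbabilityMeasure_map hT.aemeasurable_snd
  calc P {ω | σ * Z ω ≤ σ * √(M ω / n) * q}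
      = P {ω | √((n : ℝ) / M ω) * Z ω ≤ q} := measure_congr hevent
    _ = P {ω | √((n : ℝ) / M' ω) * Z' ω ≤ q} := hT.measure_mem_eq measurableSet_Iic
    _ = P.map (fun ω => √((n : ℝ) / M' ω) * Z' ω) (Set.Iic q) :=
      (Measure.map_apply_of_aemeasurable hT.aemeasurable_snd measurableSet_Iic).symm
    _ = ENNReal.ofReal α := by rw [← ofReal_cdf, hq]

/-- The fiducial (inversion-method) solvency capital `SCR(α) := σ̂·F_{T'}⁻¹(α)` with
`σ̂ := σ·√(M/n)` and `T' := √(n/M')·Z'` attains probability of solvency exactly `α`: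
`P(σ·Z ≤ σ̂·F_{T'}⁻¹(α)) = α`. -/
theorem fiducial_scr_attains_alpha
    {Ω : Type*} [MeasurableSpace Ω] (P : Measure Ω) [IsProbabilityMeasure P]
    (n : ℕ) (hn : 1 ≤ n) (σ : ℝ) (hσ : 0 < σ) (α : ℝ) (hα0 : 0 < α) (hα1 : α < 1)
    (Z Z' M M' : Ω → ℝ)
    (hZmeas : Measurable Z) (hZ'meas : Measurable Z')
    (hMmeas : Measurable M) (hM'meas : Measurable M')
    (hindep : iIndepFun ![Z, Z', M, M'] P)
    (hZ : P.map Z = gaussianReal 0 1) (hZ' : P.map Z' = gaussianReal 0 1)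
    (hM : P.map M = chiSquaredMeasure n) (hM' : P.map M' = chiSquaredMeasure n)
    -- `q = F_{T'}⁻¹(α)` is the `α`-quantile of `T' := √(n/M')·Z'`
    (q : ℝ)
    (hq : cdf (P.map (fun ω => Real.sqrt ((n : ℝ) / M' ω) * Z' ω)) q = α) :
    P {ω | σ * Z ω ≤ σ * Real.sqrt (M ω / (n : ℝ)) * q} = ENNReal.ofReal α :=
  fiducial_scr_attains_alpha_general P n hn σ hσ α Z Z' M M' hZmeas hZ'meas hMmeas hM'meas hindep hZ
    hZ' hM hM' q hq
end

section
/- Let n ≥ 1 be an integer and M a random variable that is chi-squared distributed with n degrees of freedom. Then the law of M/n (the distribution of the variance estimator from the theoretical perspective, up to the scale σ²) is not equal to the law of n/M (the fiducial parameter distribution from the undertaking's perspective, up to the scale σ̂²). -/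
/-! The two laws have different means. `𝔼[M/n] = 1`, whereas `𝔼[n/M] = n 𝔼[M⁻¹]` equals
`n/(n-2) > 1` for `n ≥ 3` and is infinite for `n ≤ 2`. Both moments come from the Gamma`(a, r)`
density times `x ^ k`: for `a + k > 0` it is a multiple of the Gamma`(a + k, r)` density, and
for `a + k ≤ 0` it is comparable to `x ^ (a + k - 1)` near `0`, hence not integrable. -/

open MeasureTheory ProbabilityTheory

open Real Set
open scoped ENNReal

lemma lintegral_ofReal_rpow_Ioo_eq_top {s t : ℝ} (ht : 0 < t) (hs : s ≤ -1) :
    ∫⁻ x in Ioo 0 t, ENNReal.ofReal (x ^ s) = ∞ := by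
  by_contra h
  have hint : IntegrableOn (fun x : ℝ => x ^ s) (Ioo 0 t) :=
    ⟨(measurable_id.pow_const s).aestronglyMeasurable,
      (hasFiniteIntegral_iff_ofReal <| (ae_restrict_mem measurableSet_Ioo).mono
        fun x hx => rpow_nonneg hx.1.le s).2 (Ne.lt_top h)⟩
  linarith [(intervalIntegral.integrableOn_Ioo_rpow_iff ht).1 hint]

namespace ProbabilityTheory

@[fun_prop]
lemma measurable_gammaPDF (a r : ℝ) : Measurable (gammaPDF a r) :=
  (measurable_gammaPDFReal a r).ennreal_ofReal

lemma gammaPDFReal_mul_rpow {a r x : ℝ} (hx : 0 < x) (k : ℝ) :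
    gammaPDFReal a r x * x ^ k = r ^ a / Gamma a * x ^ (a + k - 1) * exp (-(r * x)) := by
  rw [gammaPDFReal, if_pos hx.le, show a + k - 1 = a - 1 + k by ring, rpow_add hx]
  ring

lemma lintegral_ofReal_rpow_gammaMeasure {a r k : ℝ} (ha : 0 < a) (hr : 0 < r) (hak : 0 < a + k) :
    ∫⁻ x, ENNReal.ofReal (x ^ k) ∂gammaMeasure a r
      = ENNReal.ofReal (Gamma (a + k) / (Gamma a * r ^ k)) := by
  have hdensity : ∀ᵐ x, gammaPDF a r x * ENNReal.ofReal (x ^ k)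
      = ENNReal.ofReal (Gamma (a + k) / (Gamma a * r ^ k)) * gammaPDF (a + k) r x := by
    filter_upwards [Measure.ae_ne volume 0] with x hx0
    rcases hx0.lt_or_gt with hx | hx
    · simp [gammaPDF_of_neg hx]
    rw [gammaPDF, gammaPDF, ← ENNReal.ofReal_mul (gammaPDFReal_nonneg ha hr x),
      ← ENNReal.ofReal_mul (by positivity), gammaPDFReal_mul_rpow hx, gammaPDFReal,
      if_pos hx.le, rpow_add hr]
    have hΓa := (Gamma_pos_of_pos ha).ne'
    have hΓak := (Gamma_pos_of_pos hak).ne'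
    congr 1
    field_simp
  rw [gammaMeasure, lintegral_withDensity_eq_lintegral_mul _ (by fun_prop) (by fun_prop)]
  simp only [Pi.mul_apply]
  rw [lintegral_congr_ae hdensity, lintegral_const_mul _ (by fun_prop),
    lintegral_gammaPDF_eq_one hak hr, mul_one]

lemma lintegral_ofReal_rpow_gammaMeasure_eq_top {a r k : ℝ} (ha : 0 < a) (hr : 0 < r)
    (hak : a + k ≤ 0) :
    ∫⁻ x, ENNReal.ofReal (x ^ k) ∂gammaMeasure a r = ∞ := by
  set c := r ^ a / Gamma a * exp (-r)
  have hc : 0 < c := by have := Gamma_pos_of_pos ha; positivity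
  have hbound : ∀ x ∈ Ioo (0 : ℝ) 1, ENNReal.ofReal c * ENNReal.ofReal (x ^ (a + k - 1))
      ≤ gammaPDF a r x * ENNReal.ofReal (x ^ k) := by
    intro x hx
    rw [gammaPDF, ← ENNReal.ofReal_mul hc.le,
      ← ENNReal.ofReal_mul (gammaPDFReal_nonneg ha hr x),
      gammaPDFReal_mul_rpow hx.1]
    refine ENNReal.ofReal_le_ofReal ?_
    have hexp : exp (-r) ≤ exp (-(r * x)) := exp_le_exp.2 (by nlinarith [hx.2])
    have hΓ := Gamma_pos_of_pos ha
    have hpow := rpow_pos_of_pos hx.1 (a + k - 1)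
    calc c * x ^ (a + k - 1) = r ^ a / Gamma a * x ^ (a + k - 1) * exp (-r) := by ring
      _ ≤ r ^ a / Gamma a * x ^ (a + k - 1) * exp (-(r * x)) := by gcongr
  rw [gammaMeasure, lintegral_withDensity_eq_lintegral_mul _ (by fun_prop) (by fun_prop),
    eq_top_iff]
  simp only [Pi.mul_apply]
  calc ∞ = ENNReal.ofReal c * ∫⁻ x in Ioo 0 1, ENNReal.ofReal (x ^ (a + k - 1)) := by
        rw [lintegral_ofReal_rpow_Ioo_eq_top one_pos (by linarith),
          ENNReal.mul_top (by simpa using hc)]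
    _ = ∫⁻ x in Ioo 0 1, ENNReal.ofReal c * ENNReal.ofReal (x ^ (a + k - 1)) :=
        (lintegral_const_mul _ (by fun_prop)).symm
    _ ≤ ∫⁻ x in Ioo 0 1, gammaPDF a r x * ENNReal.ofReal (x ^ k) :=
        setLIntegral_mono (by fun_prop) hbound
    _ ≤ _ := setLIntegral_le_lintegral _ _

lemma lintegral_ofReal_chiSquaredMeasure {n : ℕ} (hn : n ≠ 0) :
    ∫⁻ x, ENNReal.ofReal x ∂chiSquaredMeasure n = n := by
  have ha : (0 : ℝ) < n / 2 := by positivity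
  have hmoment := lintegral_ofReal_rpow_gammaMeasure (k := 1) ha one_half_pos (by positivity)
  simp only [rpow_one] at hmoment
  rw [chiSquaredMeasure, hmoment, Gamma_add_one ha.ne', ← ENNReal.ofReal_natCast]
  have hΓ₀ := (Gamma_pos_of_pos ha).ne'
  congr 1
  field_simp

lemma lintegral_ofReal_inv_chiSquaredMeasure {n : ℕ} (hn : 2 < n) :
    ∫⁻ x, ENNReal.ofReal x⁻¹ ∂chiSquaredMeasure n = ENNReal.ofReal (n - 2 : ℝ)⁻¹ := by
  have hn' : (2 : ℝ) < n := by exact_mod_cast hn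
  have ha : (0 : ℝ) < n / 2 - 1 := by linarith
  have hmoment := lintegral_ofReal_rpow_gammaMeasure (a := n / 2) (k := -1) (by linarith)
    one_half_pos (by linarith)
  simp only [rpow_neg_one, ← sub_eq_add_neg] at hmoment
  have hΓ : Gamma (n / 2) = (n / 2 - 1) * Gamma (n / 2 - 1) := by
    simpa using Gamma_add_one ha.ne'
  rw [chiSquaredMeasure, hmoment, hΓ]
  have hΓ₀ := (Gamma_pos_of_pos ha).ne'
  have hn₂ : (n : ℝ) - 2 ≠ 0 := by linarith
  congr 1
  generalize Gamma (n / 2 - 1) = g at hΓ₀ ⊢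
  field_simp

lemma lintegral_ofReal_inv_chiSquaredMeasure_eq_top {n : ℕ} (hn₀ : n ≠ 0) (hn : n ≤ 2) :
    ∫⁻ x, ENNReal.ofReal x⁻¹ ∂chiSquaredMeasure n = ∞ := by
  have hn' : (n : ℝ) ≤ 2 := by exact_mod_cast hn
  rw [chiSquaredMeasure]
  simpa only [rpow_neg_one] using lintegral_ofReal_rpow_gammaMeasure_eq_top (k := -1)
    (by positivity) one_half_pos (by linarith)

lemma lintegral_ofReal_div_chiSquaredMeasure {n : ℕ} (hn : n ≠ 0) :
    ∫⁻ x, ENNReal.ofReal (x / n) ∂chiSquaredMeasure n = 1 := by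
  have hn' : (0 : ℝ) < n := by positivity
  simp_rw [div_eq_mul_inv, ENNReal.ofReal_mul' (inv_nonneg.2 hn'.le)]
  rw [lintegral_mul_const _ ENNReal.measurable_ofReal, lintegral_ofReal_chiSquaredMeasure hn,
    ← ENNReal.ofReal_natCast, ← ENNReal.ofReal_mul hn'.le, mul_inv_cancel₀ hn'.ne',
    ENNReal.ofReal_one]

lemma lintegral_ofReal_natCast_div_chiSquaredMeasure_ne_one {n : ℕ} (hn : n ≠ 0) :
    ∫⁻ x, ENNReal.ofReal (n / x) ∂chiSquaredMeasure n ≠ 1 := by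
  have hn' : (0 : ℝ) < n := by positivity
  simp_rw [div_eq_mul_inv, ENNReal.ofReal_mul hn'.le]
  rw [lintegral_const_mul _ (by fun_prop)]
  rcases le_or_gt n 2 with hn2 | hn2
  · rw [lintegral_ofReal_inv_chiSquaredMeasure_eq_top hn hn2,
      ENNReal.mul_top (by simpa using hn)]
    exact ENNReal.top_ne_one
  · have hn2' : (2 : ℝ) < n := by exact_mod_cast hn2
    rw [lintegral_ofReal_inv_chiSquaredMeasure hn2, ← ENNReal.ofReal_mul hn'.le, Ne,
      ENNReal.ofReal_eq_one, ← div_eq_mul_inv, div_eq_one_iff_eq (by linarith)]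
    linarith

end ProbabilityTheory

theorem theoretical_ne_fiducial_general
    {Ω : Type*} [MeasurableSpace Ω] (P : Measure Ω)
    (n : ℕ) (hn : 1 ≤ n) (M : Ω → ℝ) (hMmeas : Measurable M)
    (hM : P.map M = chiSquaredMeasure n) :
    P.map (fun ω => M ω / (n : ℝ)) ≠ P.map (fun ω => (n : ℝ) / M ω) := by
  have hmean : ∀ g : ℝ → ℝ, Measurable g →
      ∫⁻ x, ENNReal.ofReal x ∂P.map (fun ω => g (M ω))
        = ∫⁻ x, ENNReal.ofReal (g x) ∂chiSquaredMeasure n := fun g hg => by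
    rw [lintegral_map ENNReal.measurable_ofReal (by fun_prop), ← hM,
      lintegral_map (by fun_prop) hMmeas]
  intro hlaw
  have hmeans := congrArg (fun μ => ∫⁻ x, ENNReal.ofReal x ∂μ) hlaw
  rw [hmean (· / n) (by fun_prop), hmean (n / ·) (by fun_prop),
    lintegral_ofReal_div_chiSquaredMeasure (by omega)] at hmeans
  exact lintegral_ofReal_natCast_div_chiSquaredMeasure_ne_one (by omega) hmeans.symm

/-- For `M ~ χ²(n)`, the law of `M/n` (the distribution of the variance estimator from
the theoretical perspective, up to scale `σ²`) differs from the law of `n/M` (the fiducial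
parameter distribution from the undertaking's perspective, up to scale `σ̂²`). -/
theorem theoretical_ne_fiducial
    {Ω : Type*} [MeasurableSpace Ω] (P : Measure Ω) [IsProbabilityMeasure P]
    (n : ℕ) (hn : 1 ≤ n) (M : Ω → ℝ) (hMmeas : Measurable M)
    (hM : P.map M = chiSquaredMeasure n) :
    P.map (fun ω => M ω / (n : ℝ)) ≠ P.map (fun ω => (n : ℝ) / M ω) :=
  theoretical_ne_fiducial_general P n hn M hMmeas hM
end

section
/- With the chain ladder triangle, parameters, residues and estimators as in the context, for every k = 1, …, n−1 the following exact identities hold: f̂_k = f_k + σ_k·R_k(ζ) and σ̂_k² = σ_k²·M_k(ζ), where ζ = (ζ_{i,k}) are the triangle residues. In particular, solving these relations for (f_k, σ_k²) in terms of (f̂_k, σ̂_k²) gives the inversion-method parameter distribution f_k^{sim} = f̂_k − (σ̂_k/√(M_k(ζ')))·R_k(ζ') and (σ_k^{sim})² = σ̂_k²/M_k(ζ') for independent residue copies ζ'. -/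
open Finset

/-- `R_k(ξ) := Σ_{i=0}^{n−k} ξ_{i,k}·√(C_{i,k−1}^γ) / Σ_{h=0}^{n−k} C_{h,k−1}^γ`. -/
noncomputable def Rres (n γ : ℕ) (C : ℕ → ℕ → ℝ) (ξ : ℕ → ℕ → ℝ) (k : ℕ) : ℝ :=
  (∑ i ∈ range (n - k + 1), ξ i k * Real.sqrt ((C i (k - 1)) ^ γ)) /
    ∑ h ∈ range (n - k + 1), (C h (k - 1)) ^ γ

/-- `M_k(ξ) := (1/(n−k))·Σ_{i=0}^{n−k} C_{i,k−1}^γ·(ξ_{i,k}/√(C_{i,k−1}^γ) − R_k(ξ))²`. -/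
noncomputable def Mres (n γ : ℕ) (C : ℕ → ℕ → ℝ) (ξ : ℕ → ℕ → ℝ) (k : ℕ) : ℝ :=
  (1 / ((n : ℝ) - k)) * ∑ i ∈ range (n - k + 1),
    (C i (k - 1)) ^ γ * (ξ i k / Real.sqrt ((C i (k - 1)) ^ γ) - Rres n γ C ξ k) ^ 2

/-- The chain ladder factor estimator
`f̂_k := Σ_{i=0}^{n−k} C_{i,k−1}^γ·F_{i,k} / Σ_{h=0}^{n−k} C_{h,k−1}^γ`. -/
noncomputable def fhatCL (n γ : ℕ) (C : ℕ → ℕ → ℝ) (k : ℕ) : ℝ :=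
  (∑ i ∈ range (n - k + 1), (C i (k - 1)) ^ γ * (C i k / C i (k - 1))) /
    ∑ h ∈ range (n - k + 1), (C h (k - 1)) ^ γ

/-- The variance estimator
`σ̂_k² := (1/(n−k))·Σ_{i=0}^{n−k} C_{i,k−1}^γ·(F_{i,k} − f̂_k)²`. -/
noncomputable def sigmahatSqCL (n γ : ℕ) (C : ℕ → ℕ → ℝ) (k : ℕ) : ℝ :=
  (1 / ((n : ℝ) - k)) * ∑ i ∈ range (n - k + 1),
    (C i (k - 1)) ^ γ * (C i k / C i (k - 1) - fhatCL n γ C k) ^ 2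

/-- For every `k = 1,…,n−1` the exact identities `f̂_k = f_k + σ_k·R_k(ζ)` and
`σ̂_k² = σ_k²·M_k(ζ)` hold; in particular, solving these relations for `(f_k, σ_k²)` gives
the inversion-method parameter distribution: with `(σ_k^sim)² := σ̂_k²/M_k(ζ')` and
`f_k^sim := f̂_k − (σ̂_k/√(M_k(ζ')))·R_k(ζ')` one has `f̂_k = f_k^sim + σ_k^sim·R_k(ζ')` and
`σ̂_k² = (σ_k^sim)²·M_k(ζ')` for independent residue copies `ζ'`. -/
theorem chainLadder_inversion_identities
    (n γ : ℕ) (hn : 2 ≤ n) (hγ : γ = 0 ∨ γ = 1)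
    (C : ℕ → ℕ → ℝ) (hC : ∀ i k, i + k ≤ n → 0 < C i k)
    (f σ : ℕ → ℝ) (hf : ∀ k, 1 ≤ k → k ≤ n - 1 → 0 < f k)
    (hσ : ∀ k, 1 ≤ k → k ≤ n - 1 → 0 < σ k)
    (ζ : ℕ → ℕ → ℝ)
    (hres : ∀ i k, 1 ≤ k → i + k ≤ n →
      C i k / C i (k - 1) = f k + σ k / Real.sqrt ((C i (k - 1)) ^ γ) * ζ i k)
    (ζ' : ℕ → ℕ → ℝ) (hM' : ∀ k, 1 ≤ k → k ≤ n - 1 → 0 < Mres n γ C ζ' k) :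
    ∀ k, 1 ≤ k → k ≤ n - 1 →
      fhatCL n γ C k = f k + σ k * Rres n γ C ζ k ∧
      sigmahatSqCL n γ C k = (σ k) ^ 2 * Mres n γ C ζ k ∧
      fhatCL n γ C k =
        (fhatCL n γ C k -
            Real.sqrt (sigmahatSqCL n γ C k) / Real.sqrt (Mres n γ C ζ' k) *
              Rres n γ C ζ' k) +
          Real.sqrt (sigmahatSqCL n γ C k / Mres n γ C ζ' k) * Rres n γ C ζ' k ∧
      sigmahatSqCL n γ C k =
        (sigmahatSqCL n γ C k / Mres n γ C ζ' k) * Mres n γ C ζ' k := by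
  intro k hk1 hkn
  have hkn' : k < n := by omega
  -- positivity facts for entries in the sum
  have hCpos : ∀ i ∈ range (n - k + 1), 0 < (C i (k - 1)) ^ γ := by
    intro i hi
    simp only [mem_range] at hi
    exact pow_pos (hC i (k - 1) (by omega)) γ
  have hsum_pos : 0 < ∑ h ∈ range (n - k + 1), (C h (k - 1)) ^ γ :=
    sum_pos hCpos ⟨0, by simp⟩
  have hnk : (0 : ℝ) < (n : ℝ) - k := by
    have : (k : ℝ) < n := by exact_mod_cast hkn'
    linarith
  -- first identity
  have h1 : fhatCL n γ C k = f k + σ k * Rres n γ C ζ k := by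
    have hnum : ∑ i ∈ range (n - k + 1), (C i (k - 1)) ^ γ * (C i k / C i (k - 1)) =
        f k * (∑ h ∈ range (n - k + 1), (C h (k - 1)) ^ γ) +
          σ k * ∑ i ∈ range (n - k + 1), ζ i k * Real.sqrt ((C i (k - 1)) ^ γ) := by
      rw [mul_sum, mul_sum, ← sum_add_distrib]
      refine sum_congr rfl fun i hi => ?_
      have hik : i + k ≤ n := by simp only [mem_range] at hi; omega
      have hpos := hCpos i hi
      have hs : Real.sqrt ((C i (k - 1)) ^ γ) ^ 2 = (C i (k - 1)) ^ γ :=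
        Real.sq_sqrt hpos.le
      have hs0 : Real.sqrt ((C i (k - 1)) ^ γ) ≠ 0 :=
        ne_of_gt (Real.sqrt_pos.2 hpos)
      rw [hres i k hk1 hik]
      field_simp
      linear_combination (-(σ k * ζ i k)) * hs
    rw [fhatCL, Rres, hnum, add_div, mul_div_assoc, mul_div_assoc,
      div_self (ne_of_gt hsum_pos), mul_one]
  refine ⟨h1, ?_, ?_, ?_⟩
  · -- second identity
    rw [sigmahatSqCL, Mres]
    have hterm : ∀ i ∈ range (n - k + 1),
        (C i (k - 1)) ^ γ * (C i k / C i (k - 1) - fhatCL n γ C k) ^ 2 =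
          σ k ^ 2 * ((C i (k - 1)) ^ γ *
            (ζ i k / Real.sqrt ((C i (k - 1)) ^ γ) - Rres n γ C ζ k) ^ 2) := by
      intro i hi
      have hik : i + k ≤ n := by simp only [mem_range] at hi; omega
      rw [hres i k hk1 hik, h1]
      ring
    rw [sum_congr rfl hterm, ← mul_sum]
    ring
  · -- third identity
    have hsig : 0 ≤ sigmahatSqCL n γ C k := by
      rw [sigmahatSqCL]
      refine mul_nonneg (by positivity) (sum_nonneg fun i hi => ?_)
      exact mul_nonneg (hCpos i hi).le (sq_nonneg _)
    rw [Real.sqrt_div hsig]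
    ring
  · -- fourth identity
    exact (div_mul_cancel₀ _ (ne_of_gt (hM' k hk1 hkn))).symm
end
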